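/- There exist KS proofs of the Statman tautologies S_n whose size is O(n⁴), hence quadratic in the size |S_n| = 2n² + 2 of the tautology they prove; in particular, there is a derivation in KS from S_n to S_{n+1} of length O(n) and size O(n³). -/

import Mathlib

/-- Formulae of the calculus of structures in negation normal form. -/
inductive Formula : Type
  | top : Formula
  | bot : Formula
  | atom : ℕ → Formula
  | natom : ℕ → Formula
  | or : Formula → Formula → Formula
  | and : Formula → Formula → Formula
deriving DecidableEq

/-- Boolean evaluation of a formula under an assignment. -/
def Formula.eval (v : ℕ → Bool) : Formula → Bool
  | .top => true
  | .bot => false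
  | .atom n => v n
  | .natom n => !(v n)
  | .or a b => a.eval v || b.eval v
  | .and a b => a.eval v && b.eval v

/-- Size of a formula: number of unit and atom occurrences. -/
def Formula.size : Formula → ℕ
  | .top => 1
  | .bot => 1
  | .atom _ => 1
  | .natom _ => 1
  | .or a b => a.size + b.size
  | .and a b => a.size + b.size

/-- De Morgan dual (negation in negation normal form). -/
def Formula.dual : Formula → Formula
  | .top => .bot
  | .bot => .top
  | .atom n => .natom n
  | .natom n => .atom n
  | .or a b => .and a.dual b.dual
  | .and a b => .or a.dual b.dual

/-- The equality relation `=` on formulae: commutativity, associativity, unit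
laws, closed under reflexivity, symmetry, transitivity and context closure. -/
inductive FEq : Formula → Formula → Prop
  | orComm (a b) : FEq (.or a b) (.or b a)
  | andComm (a b) : FEq (.and a b) (.and b a)
  | orAssoc (a b c) : FEq (.or (.or a b) c) (.or a (.or b c))
  | andAssoc (a b c) : FEq (.and (.and a b) c) (.and a (.and b c))
  | orBot (a) : FEq (.or a .bot) a
  | andTop (a) : FEq (.and a .top) a
  | topTop : FEq (.or .top .top) .top
  | botBot : FEq (.and .bot .bot) .bot
  | refl (a) : FEq a a
  | symm {a b} : FEq a b → FEq b a
  | trans {a b c} : FEq a b → FEq b c → FEq a c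
  | orCongL {a b} (c) : FEq a b → FEq (.or a c) (.or b c)
  | orCongR {a b} (c) : FEq a b → FEq (.or c a) (.or c b)
  | andCongL {a b} (c) : FEq a b → FEq (.and a c) (.and b c)
  | andCongR {a b} (c) : FEq a b → FEq (.and c a) (.and c b)

/-- Closure of a rule relation under arbitrary formula contexts. -/
inductive CtxStep (R : Formula → Formula → Prop) : Formula → Formula → Prop
  | base {a b} : R a b → CtxStep R a b
  | orL {a b} (c) : CtxStep R a b → CtxStep R (.or a c) (.or b c)
  | orR {a b} (c) : CtxStep R a b → CtxStep R (.or c a) (.or c b)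
  | andL {a b} (c) : CtxStep R a b → CtxStep R (.and a c) (.and b c)
  | andR {a b} (c) : CtxStep R a b → CtxStep R (.and c a) (.and c b)

/-- `Deriv R α β l s`: there is a derivation from premiss `α` to conclusion `β`
using rules from `R` (applied inside contexts), of length `l` and total size `s`
(the sum of the sizes of all formulae appearing in the derivation). -/
inductive Deriv (R : Formula → Formula → Prop) : Formula → Formula → ℕ → ℕ → Prop
  | refl (a) : Deriv R a a 0 a.size
  | step {a b c l s} : CtxStep R a b → Deriv R b c l s → Deriv R a c (l + 1) (s + a.size)

/-- Atom `c_i` is variable `2*i`, atom `d_i` is variable `2*i+1`. -/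
def alphaF (i : ℕ) : Formula := .or (.natom (2 * i)) (.natom (2 * i + 1))

/-- `betaF k n` is `β_k^n = α_n ∧ α_{n-1} ∧ ... ∧ α_k` (for `n ≥ k`). -/
def betaF (k : ℕ) : ℕ → Formula
  | 0 => alphaF k
  | n + 1 => if n + 1 ≤ k then alphaF k else .and (alphaF (n + 1)) (betaF k n)

/-- `γ_k^n = β_{k+1}^n ∧ c_k`. -/
def gammaF (k n : ℕ) : Formula := .and (betaF (k + 1) n) (.atom (2 * k))

/-- `δ_k^n = β_{k+1}^n ∧ d_k`. -/
def deltaF (k n : ℕ) : Formula := .and (betaF (k + 1) n) (.atom (2 * k + 1))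

/-- The nested tail `(γ_k^n ∧ δ_k^n) ∨ (... ∨ ((γ_1^n ∧ δ_1^n) ∨ α_1)...)`. -/
def statTail (n : ℕ) : ℕ → Formula
  | 0 => alphaF 1
  | k + 1 => .or (.and (gammaF (k + 1) n) (deltaF (k + 1) n)) (statTail n k)

/-- The Statman tautology `S_n = ¬α_n ∨ (...)` where `¬α_n = c_n ∧ d_n`. -/
def statman (n : ℕ) : Formula :=
  .or (.and (.atom (2 * n)) (.atom (2 * n + 1))) (statTail n (n - 1))

/-- The rules of the analytic system KS: atomic interaction, atomic weakening,
atomic contraction, switch, medial, and equality. -/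
inductive KSRule : Formula → Formula → Prop
  | ai (a : ℕ) : KSRule .top (.or (.atom a) (.natom a))
  | ai' (a : ℕ) : KSRule .top (.or (.natom a) (.atom a))
  | aw (a : ℕ) : KSRule .bot (.atom a)
  | aw' (a : ℕ) : KSRule .bot (.natom a)
  | ac (a : ℕ) : KSRule (.or (.atom a) (.atom a)) (.atom a)
  | ac' (a : ℕ) : KSRule (.or (.natom a) (.natom a)) (.natom a)
  | sw (A B C : Formula) : KSRule (.and A (.or B C)) (.or (.and A B) C)
  | med (A B C D : Formula) :
      KSRule (.or (.and A B) (.and C D)) (.and (.or A C) (.or B D))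
  | eqv {a b : Formula} : FEq a b → KSRule a b


/-! ### Auxiliary development -/

local infixl:66 " ⋀ " => Formula.and
local infixl:65 " ⋁ " => Formula.or

namespace FEq

lemma orCong {a b c d} (h1 : FEq a b) (h2 : FEq c d) : FEq (a ⋁ c) (b ⋁ d) :=
  (h1.orCongL c).trans (h2.orCongR b)

lemma andCong {a b c d} (h1 : FEq a b) (h2 : FEq c d) : FEq (a ⋀ c) (b ⋀ d) :=
  (h1.andCongL c).trans (h2.andCongR b)

lemma rot (q r s : Formula) : FEq (q ⋀ (r ⋀ s)) (r ⋀ (q ⋀ s)) :=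
  (((FEq.andAssoc q r s).symm).trans ((FEq.andComm q r).andCongL s)).trans (FEq.andAssoc r q s)

lemma sw4 (p q r s : Formula) : FEq ((p ⋀ q) ⋀ (r ⋀ s)) ((p ⋀ r) ⋀ (q ⋀ s)) :=
  ((FEq.andAssoc p q (r ⋀ s)).trans ((rot q r s).andCongR p)).trans
    (FEq.andAssoc p r (q ⋀ s)).symm

lemma feq1 (a a' p d r : Formula) :
    FEq ((a ⋀ (a' ⋀ p)) ⋀ (d ⋁ r)) ((a ⋀ a') ⋀ (p ⋀ (r ⋁ d))) :=
  (((FEq.andAssoc a a' p).symm.andCongL (d ⋁ r)).trans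
    (FEq.andAssoc (a ⋀ a') p (d ⋁ r))).trans
    (((FEq.orComm d r).andCongR p).andCongR (a ⋀ a'))

lemma feqTop (a a' p d r : Formula) :
    FEq ((d ⋁ r) ⋀ (a ⋀ (a' ⋀ p))) ((a ⋀ a') ⋀ (p ⋀ (r ⋁ d))) :=
  (FEq.andComm _ _).trans (feq1 a a' p d r)

lemma feqSplit (a a' b c b' d : Formula) :
    FEq ((a ⋀ a') ⋀ ((b ⋀ c) ⋀ (b' ⋀ d))) (((a ⋀ b) ⋀ c) ⋀ ((a' ⋀ b') ⋀ d)) :=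
  (sw4 a a' (b ⋀ c) (b' ⋀ d)).trans
    (andCong (FEq.andAssoc a b c).symm (FEq.andAssoc a' b' d).symm)

lemma topAnd (x : Formula) : FEq (.top ⋀ x) x := (FEq.andComm _ _).trans (FEq.andTop x)

end FEq

lemma Deriv.comp {R : Formula → Formula → Prop} {a b l₁ s₁} (h₁ : Deriv R a b l₁ s₁) :
    ∀ {c l₂ s₂}, Deriv R b c l₂ s₂ → ∃ s, s ≤ s₁ + s₂ ∧ Deriv R a c (l₁ + l₂) s := by
  induction h₁ with
  | refl a =>
      intro c l₂ s₂ h₂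
      exact ⟨s₂, Nat.le_add_left _ _, by simpa using h₂⟩
  | @step a₀ b₀ c₀ l s h d ih =>
      intro c l₂ s₂ h₂
      obtain ⟨t, ht, hd⟩ := ih h₂
      refine ⟨t + a₀.size, by omega, ?_⟩
      have := Deriv.step h hd
      rwa [show l + l₂ + 1 = l + 1 + l₂ by omega] at this

lemma Deriv.ctxOrL {R : Formula → Formula → Prop} {a b l s} (h : Deriv R a b l s) (c : Formula) :
    Deriv R (a ⋁ c) (b ⋁ c) l (s + (l + 1) * c.size) := by
  induction h with
  | refl a => simpa [Formula.size] using Deriv.refl (R := R) (a ⋁ c)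
  | @step a₀ b₀ c₀ l s h d ih =>
      have h' := Deriv.step (CtxStep.orL c h) ih
      have e : s + (l + 1) * c.size + (a₀ ⋁ c).size
          = s + a₀.size + (l + 1 + 1) * c.size := by
        simp [Formula.size]; ring
      rwa [e] at h'

lemma Deriv.ctxOrR {R : Formula → Formula → Prop} {a b l s} (h : Deriv R a b l s) (c : Formula) :
    Deriv R (c ⋁ a) (c ⋁ b) l (s + (l + 1) * c.size) := by
  induction h with
  | refl a => simpa [Formula.size, Nat.add_comm] using Deriv.refl (R := R) (c ⋁ a)
  | @step a₀ b₀ c₀ l s h d ih =>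
      have h' := Deriv.step (CtxStep.orR c h) ih
      have e : s + (l + 1) * c.size + (c ⋁ a₀).size
          = s + a₀.size + (l + 1 + 1) * c.size := by
        simp [Formula.size]; ring
      rwa [e] at h'

lemma Deriv.ctxAndL {R : Formula → Formula → Prop} {a b l s} (h : Deriv R a b l s) (c : Formula) :
    Deriv R (a ⋀ c) (b ⋀ c) l (s + (l + 1) * c.size) := by
  induction h with
  | refl a => simpa [Formula.size] using Deriv.refl (R := R) (a ⋀ c)
  | @step a₀ b₀ c₀ l s h d ih =>
      have h' := Deriv.step (CtxStep.andL c h) ih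
      have e : s + (l + 1) * c.size + (a₀ ⋀ c).size
          = s + a₀.size + (l + 1 + 1) * c.size := by
        simp [Formula.size]; ring
      rwa [e] at h'

lemma Deriv.ctxAndR {R : Formula → Formula → Prop} {a b l s} (h : Deriv R a b l s) (c : Formula) :
    Deriv R (c ⋀ a) (c ⋀ b) l (s + (l + 1) * c.size) := by
  induction h with
  | refl a => simpa [Formula.size, Nat.add_comm] using Deriv.refl (R := R) (c ⋀ a)
  | @step a₀ b₀ c₀ l s h d ih =>
      have h' := Deriv.step (CtxStep.andR c h) ih
      have e : s + (l + 1) * c.size + (c ⋀ a₀).size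
          = s + a₀.size + (l + 1 + 1) * c.size := by
        simp [Formula.size]; ring
      rwa [e] at h'

/-- Bounded derivability: a KS derivation of length at most `l` in which every
formula has size at most `m` (so total size at most `(l+1)*m`). -/
def DB (a b : Formula) (l m : ℕ) : Prop :=
  ∃ l' s', Deriv KSRule a b l' s' ∧ l' ≤ l ∧ s' ≤ (l + 1) * m

namespace DB

lemma mono {a b l m l₂ m₂} (h : DB a b l m) (hl : l ≤ l₂) (hm : m ≤ m₂) : DB a b l₂ m₂ := by
  obtain ⟨l', s', hd, h1, h2⟩ := h
  exact ⟨l', s', hd, h1.trans hl, h2.trans (Nat.mul_le_mul (by omega) hm)⟩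

lemma single {a b m} (h : CtxStep KSRule a b) (ha : a.size ≤ m) (hb : b.size ≤ m) :
    DB a b 1 m :=
  ⟨1, b.size + a.size, Deriv.step h (Deriv.refl b), le_rfl, by omega⟩

lemma eqv {a b m} (h : FEq a b) (ha : a.size ≤ m) (hb : b.size ≤ m) : DB a b 1 m :=
  single (CtxStep.base (KSRule.eqv h)) ha hb

lemma comp {a b c l₁ l₂ m} (h₁ : DB a b l₁ m) (h₂ : DB b c l₂ m) :
    DB a c (l₁ + l₂ + 1) m := by
  obtain ⟨l₁', s₁', d₁, hl₁, hs₁⟩ := h₁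
  obtain ⟨l₂', s₂', d₂, hl₂, hs₂⟩ := h₂
  obtain ⟨s, hs, d⟩ := d₁.comp d₂
  refine ⟨l₁' + l₂', s, d, by omega, ?_⟩
  have : (l₁ + 1) * m + (l₂ + 1) * m = (l₁ + l₂ + 1 + 1) * m := by ring
  omega

lemma orL {a b l m} (h : DB a b l m) (c : Formula) : DB (a ⋁ c) (b ⋁ c) l (m + c.size) := by
  obtain ⟨l', s', d, hl, hs⟩ := h
  refine ⟨l', s' + (l' + 1) * c.size, d.ctxOrL c, hl, ?_⟩
  have h1 : (l' + 1) * c.size ≤ (l + 1) * c.size := Nat.mul_le_mul (by omega) le_rfl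
  have : (l + 1) * m + (l + 1) * c.size = (l + 1) * (m + c.size) := by ring
  omega

lemma orR {a b l m} (h : DB a b l m) (c : Formula) : DB (c ⋁ a) (c ⋁ b) l (m + c.size) := by
  obtain ⟨l', s', d, hl, hs⟩ := h
  refine ⟨l', s' + (l' + 1) * c.size, d.ctxOrR c, hl, ?_⟩
  have h1 : (l' + 1) * c.size ≤ (l + 1) * c.size := Nat.mul_le_mul (by omega) le_rfl
  have : (l + 1) * m + (l + 1) * c.size = (l + 1) * (m + c.size) := by ring
  omega

lemma andL {a b l m} (h : DB a b l m) (c : Formula) : DB (a ⋀ c) (b ⋀ c) l (m + c.size) := by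
  obtain ⟨l', s', d, hl, hs⟩ := h
  refine ⟨l', s' + (l' + 1) * c.size, d.ctxAndL c, hl, ?_⟩
  have h1 : (l' + 1) * c.size ≤ (l + 1) * c.size := Nat.mul_le_mul (by omega) le_rfl
  have : (l + 1) * m + (l + 1) * c.size = (l + 1) * (m + c.size) := by ring
  omega

lemma andR {a b l m} (h : DB a b l m) (c : Formula) : DB (c ⋀ a) (c ⋀ b) l (m + c.size) := by
  obtain ⟨l', s', d, hl, hs⟩ := h
  refine ⟨l', s' + (l' + 1) * c.size, d.ctxAndR c, hl, ?_⟩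
  have h1 : (l' + 1) * c.size ≤ (l + 1) * c.size := Nat.mul_le_mul (by omega) le_rfl
  have : (l + 1) * m + (l + 1) * c.size = (l + 1) * (m + c.size) := by ring
  omega

end DB

/-- `¬α_i = c_i ∧ d_i`. -/
def NAF (i : ℕ) : Formula := (.atom (2 * i)) ⋀ (.atom (2 * i + 1))

/-- Conjunction of `m` copies of `α_i` (with a trailing `⊤`). -/
def apow (i : ℕ) : ℕ → Formula
  | 0 => .top
  | m + 1 => (alphaF i) ⋀ (apow i m)

@[simp] lemma size_alphaF (i : ℕ) : (alphaF i).size = 2 := rfl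
@[simp] lemma size_NAF (i : ℕ) : (NAF i).size = 2 := rfl

@[simp] lemma size_apow (i m : ℕ) : (apow i m).size = 2 * m + 1 := by
  induction m with
  | zero => rfl
  | succ m ih =>
      simp only [apow, Formula.size, ih, size_alphaF]
      omega

lemma size_betaF (k m : ℕ) : (betaF k m).size ≤ 2 * m + 2 := by
  induction m with
  | zero => simp [betaF]
  | succ m ih =>
      rw [betaF]
      split
      · simp only [size_alphaF]; omega
      · simp only [Formula.size, size_alphaF]; omega

lemma size_gammaF (k m : ℕ) : (gammaF k m).size ≤ 2 * m + 3 := by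
  have := size_betaF (k + 1) m
  simp [gammaF, Formula.size]; omega

lemma size_deltaF (k m : ℕ) : (deltaF k m).size ≤ 2 * m + 3 := by
  have := size_betaF (k + 1) m
  simp [deltaF, Formula.size]; omega

lemma size_statTail (n k : ℕ) : (statTail n k).size ≤ (4 * n + 6) * k + 2 := by
  induction k with
  | zero => simp [statTail]
  | succ k ih =>
      have h1 := size_gammaF (k + 1) n
      have h2 := size_deltaF (k + 1) n
      have h3 : (statTail n (k + 1)).size
          = (gammaF (k + 1) n).size + (deltaF (k + 1) n).size + (statTail n k).size := by
        simp [statTail, Formula.size]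
      have h4 : (4 * n + 6) * (k + 1) = (4 * n + 6) * k + (4 * n + 6) := by ring
      omega

lemma size_statman (n : ℕ) : (statman n).size ≤ (4 * n + 6) * n + 4 := by
  have := size_statTail n (n - 1)
  have h2 : (4 * n + 6) * (n - 1) ≤ (4 * n + 6) * n := Nat.mul_le_mul_left _ (by omega)
  simp [statman, Formula.size]
  omega

lemma betaF_succ {k m : ℕ} (h : k ≤ m) : betaF k (m + 1) = (alphaF (m + 1)) ⋀ (betaF k m) := by
  rw [betaF, if_neg (by omega)]

lemma betaF_self (m : ℕ) : betaF (m + 1) (m + 1) = alphaF (m + 1) := by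
  rw [betaF, if_pos le_rfl]

/-- KS proof of `¬α_i ∨ α_i` from `⊤`. -/
lemma identLemma (i : ℕ) : DB .top ((NAF i) ⋁ (alphaF i)) 20 10 := by
  set C : Formula := .atom (2 * i)
  set D : Formula := .atom (2 * i + 1)
  set nC : Formula := .natom (2 * i)
  set nD : Formula := .natom (2 * i + 1)
  have g0 : DB .top (.top ⋀ .top) 1 10 :=
    DB.eqv (FEq.symm (FEq.andTop .top)) (by simp [Formula.size]) (by simp [Formula.size])
  have g1 : DB (.top ⋀ .top) ((D ⋁ nD) ⋀ .top) 1 10 :=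
    DB.single (CtxStep.andL .top (CtxStep.base (KSRule.ai (2 * i + 1))))
      (by simp [Formula.size]) (by simp [Formula.size, C, D, nC, nD])
  have g2 : DB ((D ⋁ nD) ⋀ .top) ((D ⋁ nD) ⋀ (C ⋁ nC)) 1 10 :=
    DB.single (CtxStep.andR (D ⋁ nD) (CtxStep.base (KSRule.ai (2 * i))))
      (by simp [Formula.size, C, D, nC, nD]) (by simp [Formula.size, C, D, nC, nD])
  have g3 : DB ((D ⋁ nD) ⋀ (C ⋁ nC)) (((D ⋁ nD) ⋀ C) ⋁ nC) 1 10 :=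
    DB.single (CtxStep.base (KSRule.sw (D ⋁ nD) C nC))
      (by simp [Formula.size, C, D, nC, nD]) (by simp [Formula.size, C, D, nC, nD])
  have g4 : DB (((D ⋁ nD) ⋀ C) ⋁ nC) ((C ⋀ (D ⋁ nD)) ⋁ nC) 1 10 :=
    DB.eqv ((FEq.andComm (D ⋁ nD) C).orCongL nC)
      (by simp [Formula.size, C, D, nC, nD]) (by simp [Formula.size, C, D, nC, nD])
  have g5 : DB ((C ⋀ (D ⋁ nD)) ⋁ nC) (((C ⋀ D) ⋁ nD) ⋁ nC) 1 10 :=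
    DB.single (CtxStep.orL nC (CtxStep.base (KSRule.sw C D nD)))
      (by simp [Formula.size, C, D, nC, nD]) (by simp [Formula.size, C, D, nC, nD])
  have g6 : DB (((C ⋀ D) ⋁ nD) ⋁ nC) ((C ⋀ D) ⋁ (nC ⋁ nD)) 1 10 :=
    DB.eqv ((FEq.orAssoc (C ⋀ D) nD nC).trans ((FEq.orComm nD nC).orCongR (C ⋀ D)))
      (by simp [Formula.size, C, D, nC, nD]) (by simp [Formula.size, C, D, nC, nD])
  have : DB .top ((C ⋀ D) ⋁ (nC ⋁ nD)) 13 10 :=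
    (((((g0.comp g1).comp g2).comp g3).comp g4).comp g5).comp g6
  exact this.mono (by omega) le_rfl

/-- contraction of `¬α_i ∨ ¬α_i`. -/
lemma contractNAF (i : ℕ) : DB ((NAF i) ⋁ (NAF i)) (NAF i) 10 10 := by
  set C : Formula := .atom (2 * i)
  set D : Formula := .atom (2 * i + 1)
  have h0 : DB ((C ⋀ D) ⋁ (C ⋀ D)) ((C ⋁ C) ⋀ (D ⋁ D)) 1 10 :=
    DB.single (CtxStep.base (KSRule.med C D C D))
      (by simp [Formula.size, C, D]) (by simp [Formula.size, C, D])
  have h1 : DB ((C ⋁ C) ⋀ (D ⋁ D)) (C ⋀ (D ⋁ D)) 1 10 :=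
    DB.single (CtxStep.andL (D ⋁ D) (CtxStep.base (KSRule.ac (2 * i))))
      (by simp [Formula.size, C, D]) (by simp [Formula.size, C, D])
  have h2 : DB (C ⋀ (D ⋁ D)) (C ⋀ D) 1 10 :=
    DB.single (CtxStep.andR C (CtxStep.base (KSRule.ac (2 * i + 1))))
      (by simp [Formula.size, C, D]) (by simp [Formula.size, C, D])
  exact ((h0.comp h1).comp h2).mono (by omega) le_rfl

/-- weakening `⊤ → ⊤ ∨ ¬α_i`. -/
lemma weakNAF (i : ℕ) : DB .top (.top ⋁ (NAF i)) 10 10 := by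
  set C : Formula := .atom (2 * i)
  set D : Formula := .atom (2 * i + 1)
  have w0 : DB .top (.top ⋁ (Formula.bot ⋀ .bot)) 1 10 :=
    DB.eqv ((FEq.orBot .top).symm.trans ((FEq.botBot).symm.orCongR .top))
      (by simp [Formula.size]) (by simp [Formula.size])
  have w1 : DB (.top ⋁ (Formula.bot ⋀ .bot)) (.top ⋁ (C ⋀ .bot)) 1 10 :=
    DB.single (CtxStep.orR .top (CtxStep.andL .bot (CtxStep.base (KSRule.aw (2 * i)))))
      (by simp [Formula.size]) (by simp [Formula.size, C])
  have w2 : DB (.top ⋁ (C ⋀ .bot)) (.top ⋁ (C ⋀ D)) 1 10 :=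
    DB.single (CtxStep.orR .top (CtxStep.andR C (CtxStep.base (KSRule.aw (2 * i + 1)))))
      (by simp [Formula.size, C]) (by simp [Formula.size, C, D])
  exact ((w0.comp w1).comp w2).mono (by omega) le_rfl

/-- KS proof of `α_i ∧ ... ∧ α_i ∨ ¬α_i` (with `m` copies of `α_i`) from `⊤`. -/
lemma bigIdent (i : ℕ) : ∀ m : ℕ, DB .top ((apow i m) ⋁ (NAF i)) (60 * m + 60) (8 * m + 20) := by
  intro m
  induction m with
  | zero => exact (weakNAF i).mono (by omega) (by omega)
  | succ m ih =>
      set A : Formula := alphaF i with hA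
      set NA : Formula := NAF i with hNA
      set P : Formula := apow i m with hP
      have hPs : P.size = 2 * m + 1 := size_apow i m
      set M : ℕ := 8 * (m + 1) + 20 with hM
      have hsz : ∀ x : Formula, x.size ≤ 2 * m + 13 → x.size ≤ M := by intro x hx; omega
      have k0 : DB .top (.top ⋀ .top) 1 M :=
        DB.eqv (FEq.symm (FEq.andTop .top)) (by simp [Formula.size]; omega) (by simp [Formula.size]; omega)
      have k1 : DB (.top ⋀ .top) ((NA ⋁ A) ⋀ .top) 20 M :=
        ((identLemma i).andL .top).mono le_rfl (by simp [Formula.size]; omega)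
      have k2 : DB ((NA ⋁ A) ⋀ .top) ((NA ⋁ A) ⋀ (P ⋁ NA)) (60 * m + 60) M :=
        (ih.andR (NA ⋁ A)).mono le_rfl (by simp [Formula.size, hNA, hA]; omega)
      have k3 : DB ((NA ⋁ A) ⋀ (P ⋁ NA)) ((A ⋁ NA) ⋀ (P ⋁ NA)) 1 M :=
        DB.eqv ((FEq.orComm NA A).andCongL (P ⋁ NA))
          (hsz _ (by simp [Formula.size, hNA, hA, hPs]  <;> omega))
          (hsz _ (by simp [Formula.size, hNA, hA, hPs]  <;> omega))
      have k4 : DB ((A ⋁ NA) ⋀ (P ⋁ NA)) (((A ⋁ NA) ⋀ P) ⋁ NA) 1 M :=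
        DB.single (CtxStep.base (KSRule.sw (A ⋁ NA) P NA))
          (hsz _ (by simp [Formula.size, hNA, hA, hPs]  <;> omega))
          (hsz _ (by simp [Formula.size, hNA, hA, hPs]  <;> omega))
      have k5 : DB (((A ⋁ NA) ⋀ P) ⋁ NA) ((P ⋀ (A ⋁ NA)) ⋁ NA) 1 M :=
        DB.eqv ((FEq.andComm (A ⋁ NA) P).orCongL NA)
          (hsz _ (by simp [Formula.size, hNA, hA, hPs]  <;> omega))
          (hsz _ (by simp [Formula.size, hNA, hA, hPs]  <;> omega))
      have k6 : DB ((P ⋀ (A ⋁ NA)) ⋁ NA) (((P ⋀ A) ⋁ NA) ⋁ NA) 1 M :=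
        DB.single (CtxStep.orL NA (CtxStep.base (KSRule.sw P A NA)))
          (hsz _ (by simp [Formula.size, hNA, hA, hPs]  <;> omega))
          (hsz _ (by simp [Formula.size, hNA, hA, hPs]  <;> omega))
      have k7 : DB (((P ⋀ A) ⋁ NA) ⋁ NA) ((P ⋀ A) ⋁ (NA ⋁ NA)) 1 M :=
        DB.eqv (FEq.orAssoc (P ⋀ A) NA NA)
          (hsz _ (by simp [Formula.size, hNA, hA, hPs]  <;> omega))
          (hsz _ (by simp [Formula.size, hNA, hA, hPs]  <;> omega))
      have k8 : DB ((P ⋀ A) ⋁ (NA ⋁ NA)) ((P ⋀ A) ⋁ NA) 10 M :=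
        ((contractNAF i).orR (P ⋀ A)).mono le_rfl (by simp [Formula.size, hA, hPs]; omega)
      have k9 : DB ((P ⋀ A) ⋁ NA) ((A ⋀ P) ⋁ NA) 1 M :=
        DB.eqv ((FEq.andComm P A).orCongL NA)
          (hsz _ (by simp [Formula.size, hNA, hA, hPs]  <;> omega))
          (hsz _ (by simp [Formula.size, hNA, hA, hPs]  <;> omega))
      have htot :=
        ((((((((k0.comp k1).comp k2).comp k3).comp k4).comp k5).comp k6).comp k7).comp
          k8).comp k9
      have : apow i (m + 1) = A ⋀ P := rfl
      rw [this]
      exact htot.mono (by omega) (by omega)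

/-- Distributing `2k` copies of `α_{n+1}` over the tail of `S_n` yields the tail
of `S_{n+1}`. -/
lemma tailLem (n : ℕ) : ∀ k : ℕ, k + 1 ≤ n →
    DB ((apow (n + 1) (2 * k)) ⋀ (statTail n k)) (statTail (n + 1) k)
      (20 * k + 20) (8 * (n + 1) ^ 2 + (5 * n + 10) * k) := by
  intro k
  induction k with
  | zero =>
      intro _
      have h1 : 1 ≤ (n + 1) ^ 2 := Nat.one_le_pow 2 (n + 1) (by omega)
      have e0 : apow (n + 1) (2 * 0) = Formula.top := rfl
      have e1 : statTail n 0 = alphaF 1 := rfl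
      have e2 : statTail (n + 1) 0 = alphaF 1 := rfl
      rw [e0, e1, e2]
      exact (DB.eqv (m := 3) (FEq.topAnd (alphaF 1)) (by simp [Formula.size])
        (by simp [Formula.size])).mono (by omega) (by omega)
  | succ k ih =>
      intro h
      have ih' := ih (by omega)
      set A : Formula := alphaF (n + 1) with hA
      set P : Formula := apow (n + 1) (2 * k) with hP
      set B : Formula := betaF (k + 2) n with hB
      set Ck : Formula := .atom (2 * (k + 1)) with hCk
      set Dk : Formula := .atom (2 * (k + 1) + 1) with hDk
      set R : Formula := statTail n k with hR
      set M : ℕ := 8 * (n + 1) ^ 2 + (5 * n + 10) * (k + 1) with hM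
      -- numeric facts
      have hPs : P.size = 2 * (2 * k) + 1 := size_apow _ _
      have hBs : B.size ≤ 2 * n + 2 := size_betaF _ n
      have hRs : R.size ≤ (4 * n + 6) * k + 2 := size_statTail n k
      have hTs : (statTail (n + 1) k).size ≤ (4 * n + 10) * k + 2 := by
        have := size_statTail (n + 1) k
        have e : (4 * (n + 1) + 6) * k = (4 * n + 10) * k := by ring
        omega
      have hq1 : 8 * (n + 1) ^ 2 = 8 * n ^ 2 + 16 * n + 8 := by ring
      have hq2 : (5 * n + 10) * (k + 1) = (5 * n + 10) * k + 5 * n + 10 := by ring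
      have hm1 : (4 * n + 6) * k ≤ (5 * n + 10) * k := Nat.mul_le_mul_right _ (by omega)
      have hm2 : (4 * n + 10) * k ≤ (5 * n + 10) * k := Nat.mul_le_mul_right _ (by omega)
      -- structural facts
      have hstart : apow (n + 1) (2 * (k + 1)) = A ⋀ (A ⋀ P) := by
        rw [show 2 * (k + 1) = 2 * k + 1 + 1 by ring]; rfl
      have hstart2 : statTail n (k + 1) = ((B ⋀ Ck) ⋀ (B ⋀ Dk)) ⋁ R := rfl
      have hb : betaF (k + 2) (n + 1) = A ⋀ B := betaF_succ (by omega)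
      have hfin : statTail (n + 1) (k + 1)
          = (((A ⋀ B) ⋀ Ck) ⋀ ((A ⋀ B) ⋀ Dk)) ⋁ statTail (n + 1) k := by
        simp [statTail, gammaF, deltaF, hb, hCk, hDk]
      -- the derivation
      have t1 : DB ((A ⋀ (A ⋀ P)) ⋀ (((B ⋀ Ck) ⋀ (B ⋀ Dk)) ⋁ R))
          ((A ⋀ A) ⋀ (P ⋀ (R ⋁ ((B ⋀ Ck) ⋀ (B ⋀ Dk))))) 1 M :=
        DB.eqv (FEq.feq1 A A P ((B ⋀ Ck) ⋀ (B ⋀ Dk)) R)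
          (by simp only [Formula.size, hA, hCk, hDk, size_alphaF, hPs]; omega)
          (by simp only [Formula.size, hA, hCk, hDk, size_alphaF, hPs]; omega)
      have t2 : DB ((A ⋀ A) ⋀ (P ⋀ (R ⋁ ((B ⋀ Ck) ⋀ (B ⋀ Dk)))))
          ((A ⋀ A) ⋀ ((P ⋀ R) ⋁ ((B ⋀ Ck) ⋀ (B ⋀ Dk)))) 1 M :=
        DB.single (CtxStep.andR (A ⋀ A) (CtxStep.base (KSRule.sw P R ((B ⋀ Ck) ⋀ (B ⋀ Dk)))))
          (by simp only [Formula.size, hA, hCk, hDk, size_alphaF, hPs]; omega)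
          (by simp only [Formula.size, hA, hCk, hDk, size_alphaF, hPs]; omega)
      have t3 : DB ((A ⋀ A) ⋀ ((P ⋀ R) ⋁ ((B ⋀ Ck) ⋀ (B ⋀ Dk))))
          ((A ⋀ A) ⋀ (((B ⋀ Ck) ⋀ (B ⋀ Dk)) ⋁ (P ⋀ R))) 1 M :=
        DB.eqv ((FEq.orComm (P ⋀ R) ((B ⋀ Ck) ⋀ (B ⋀ Dk))).andCongR (A ⋀ A))
          (by simp only [Formula.size, hA, hCk, hDk, size_alphaF, hPs]; omega)
          (by simp only [Formula.size, hA, hCk, hDk, size_alphaF, hPs]; omega)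
      have t4 : DB ((A ⋀ A) ⋀ (((B ⋀ Ck) ⋀ (B ⋀ Dk)) ⋁ (P ⋀ R)))
          (((A ⋀ A) ⋀ ((B ⋀ Ck) ⋀ (B ⋀ Dk))) ⋁ (P ⋀ R)) 1 M :=
        DB.single (CtxStep.base (KSRule.sw (A ⋀ A) ((B ⋀ Ck) ⋀ (B ⋀ Dk)) (P ⋀ R)))
          (by simp only [Formula.size, hA, hCk, hDk, size_alphaF, hPs]; omega)
          (by simp only [Formula.size, hA, hCk, hDk, size_alphaF, hPs]; omega)
      have t5 : DB (((A ⋀ A) ⋀ ((B ⋀ Ck) ⋀ (B ⋀ Dk))) ⋁ (P ⋀ R))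
          ((((A ⋀ B) ⋀ Ck) ⋀ ((A ⋀ B) ⋀ Dk)) ⋁ (P ⋀ R)) 1 M :=
        DB.eqv ((FEq.feqSplit A A B Ck B Dk).orCongL (P ⋀ R))
          (by simp only [Formula.size, hA, hCk, hDk, size_alphaF, hPs]; omega)
          (by simp only [Formula.size, hA, hCk, hDk, size_alphaF, hPs]; omega)
      have t6 : DB ((((A ⋀ B) ⋀ Ck) ⋀ ((A ⋀ B) ⋀ Dk)) ⋁ (P ⋀ R))
          ((((A ⋀ B) ⋀ Ck) ⋀ ((A ⋀ B) ⋀ Dk)) ⋁ statTail (n + 1) k) (20 * k + 20) M :=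
        (ih'.orR (((A ⋀ B) ⋀ Ck) ⋀ ((A ⋀ B) ⋀ Dk))).mono le_rfl
          (by simp only [Formula.size, hA, hCk, hDk, size_alphaF, hPs]; omega)
      have htot := ((((t1.comp t2).comp t3).comp t4).comp t5).comp t6
      rw [hstart, hstart2, hfin]
      exact htot.mono (by omega) le_rfl

set_option linter.unnecessarySeqFocus false in
set_option linter.unreachableTactic false in
set_option linter.unusedTactic false in
/-- The key derivation in KS from `S_n` to `S_{n+1}`, of length `O(n)` with all
formulae of size `O(n²)`. -/
lemma stepLem (j : ℕ) :
    DB (statman (j + 1)) (statman (j + 2)) (150 * j + 300) (30 * j ^ 2 + 200 * j + 300) := by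
  set A : Formula := alphaF (j + 2) with hA
  set NA : Formula := NAF (j + 2) with hNA
  set PW : Formula := apow (j + 2) (2 * (j + 1)) with hPW
  set P2 : Formula := apow (j + 2) (2 * j) with hP2
  set Cn : Formula := .atom (2 * (j + 1)) with hCn
  set Dn : Formula := .atom (2 * (j + 1) + 1) with hDn
  set R : Formula := statTail (j + 1) j with hR
  set S : Formula := statman (j + 1) with hS
  have Fm : Nat.mul 2 j = 2 * j := rfl
  have Fm2 : Nat.mul 2 (j + 1) = 2 * (j + 1) := rfl
  -- numeric facts
  have F1 : (statman (j + 1)).size ≤ 4 * j ^ 2 + 14 * j + 14 := by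
    have h1 := size_statman (j + 1)
    have e : (4 * (j + 1) + 6) * (j + 1) = 4 * j ^ 2 + 14 * j + 10 := by ring
    omega
  have F2 : (statTail (j + 1) j).size ≤ 4 * j ^ 2 + 10 * j + 2 := by
    have h1 := size_statTail (j + 1) j
    have e : (4 * (j + 1) + 6) * j = 4 * j ^ 2 + 10 * j := by ring
    omega
  have F3 : (statTail (j + 2) j).size ≤ 4 * j ^ 2 + 14 * j + 2 := by
    have h1 := size_statTail (j + 2) j
    have e : (4 * (j + 2) + 6) * j = 4 * j ^ 2 + 14 * j := by ring
    omega
  have F4 : (statTail (j + 2) (j + 1)).size ≤ 4 * j ^ 2 + 18 * j + 16 := by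
    have h1 := size_statTail (j + 2) (j + 1)
    have e : (4 * (j + 2) + 6) * (j + 1) = 4 * j ^ 2 + 18 * j + 14 := by ring
    omega
  have F5 : (betaF (j + 2) (j + 2)).size ≤ 2 * j + 6 := by
    have := size_betaF (j + 2) (j + 2); omega
  have F6 : (betaF (j + 1 + 1) (j + 1 + 1)).size ≤ 2 * j + 6 := by
    have := size_betaF (j + 1 + 1) (j + 1 + 1); omega
  have F7 : (betaF (j + 2) (j + 1)).size ≤ 2 * j + 4 := by
    have := size_betaF (j + 2) (j + 1); omega
  have F7' : (betaF (j + 1 + 1) (j + 2)).size ≤ 2 * j + 6 := by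
    have := size_betaF (j + 1 + 1) (j + 2); omega
  have G1 : 8 * (j + 1 + 1) ^ 2 = 8 * j ^ 2 + 32 * j + 32 := by ring
  have G1' : 8 * (j + 2) ^ 2 = 8 * j ^ 2 + 32 * j + 32 := by ring
  have G2 : (5 * (j + 1) + 10) * j = 5 * j ^ 2 + 15 * j := by ring
  -- structural facts
  have hSeq : S = (Cn ⋀ Dn) ⋁ R := by
    rw [hS, hCn, hDn, hR, statman]; norm_num
  have hPWeq : PW = A ⋀ (A ⋀ P2) := by
    rw [hPW, show 2 * (j + 1) = 2 * j + 1 + 1 by ring]; rfl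
  have hfinD : statTail (j + 2) (j + 1) = ((A ⋀ Cn) ⋀ (A ⋀ Dn)) ⋁ statTail (j + 2) j := by
    rw [hA, hCn, hDn]
    rw [statTail, gammaF, deltaF]
    rw [show j + 1 + 1 = j + 2 by ring, show (j + 2 : ℕ) = (j + 1) + 1 by ring, betaF_self]
  have hfin : statman (j + 2) = NA ⋁ statTail (j + 2) (j + 1) := by
    rw [statman, hNA, NAF]; norm_num
  set M : ℕ := 30 * j ^ 2 + 190 * j + 280 with hM
  -- the derivation
  have u0 : DB S (S ⋀ .top) 1 M :=
    DB.eqv (FEq.symm (FEq.andTop S))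
      (by simp only [Formula.size, hS, hM, Nat.add_sub_cancel] <;> omega) (by simp only [Formula.size, hS, hM, Nat.add_sub_cancel] <;> omega)
  have u1 : DB (S ⋀ .top) (S ⋀ (PW ⋁ NA)) (60 * (2 * (j + 1)) + 60) M :=
    ((bigIdent (j + 2) (2 * (j + 1))).andR S).mono le_rfl
      (by simp only [Formula.size, hS, hM, Nat.add_sub_cancel] <;> omega)
  have u2 : DB (S ⋀ (PW ⋁ NA)) ((S ⋀ PW) ⋁ NA) 1 M :=
    DB.single (CtxStep.base (KSRule.sw S PW NA))
      (by simp only [Formula.size, hS, hM, hNA, size_NAF, hPW, size_apow, Nat.add_sub_cancel] <;> omega)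
      (by simp only [Formula.size, hS, hM, hNA, size_NAF, hPW, size_apow, Nat.add_sub_cancel] <;> omega)
  -- stage D : S ⋀ PW → statTail (j+2) (j+1)
  have v0 : DB (S ⋀ PW) ((A ⋀ A) ⋀ (P2 ⋀ (R ⋁ (Cn ⋀ Dn)))) 1 M := by
    rw [hSeq, hPWeq]
    exact DB.eqv (FEq.feqTop A A P2 (Cn ⋀ Dn) R)
      (by simp only [Formula.size, hA, size_alphaF, hCn, hDn, hP2, size_apow, hR, hM] <;> omega)
      (by simp only [Formula.size, hA, size_alphaF, hCn, hDn, hP2, size_apow, hR, hM] <;> omega)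
  have v1 : DB ((A ⋀ A) ⋀ (P2 ⋀ (R ⋁ (Cn ⋀ Dn))))
      ((A ⋀ A) ⋀ ((P2 ⋀ R) ⋁ (Cn ⋀ Dn))) 1 M :=
    DB.single (CtxStep.andR (A ⋀ A) (CtxStep.base (KSRule.sw P2 R (Cn ⋀ Dn))))
      (by simp only [Formula.size, hA, size_alphaF, hCn, hDn, hP2, size_apow, hR, hM] <;> omega)
      (by simp only [Formula.size, hA, size_alphaF, hCn, hDn, hP2, size_apow, hR, hM] <;> omega)
  have v2 : DB ((A ⋀ A) ⋀ ((P2 ⋀ R) ⋁ (Cn ⋀ Dn)))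
      ((A ⋀ A) ⋀ ((Cn ⋀ Dn) ⋁ (P2 ⋀ R))) 1 M :=
    DB.eqv ((FEq.orComm (P2 ⋀ R) (Cn ⋀ Dn)).andCongR (A ⋀ A))
      (by simp only [Formula.size, hA, size_alphaF, hCn, hDn, hP2, size_apow, hR, hM] <;> omega)
      (by simp only [Formula.size, hA, size_alphaF, hCn, hDn, hP2, size_apow, hR, hM] <;> omega)
  have v3 : DB ((A ⋀ A) ⋀ ((Cn ⋀ Dn) ⋁ (P2 ⋀ R)))
      (((A ⋀ A) ⋀ (Cn ⋀ Dn)) ⋁ (P2 ⋀ R)) 1 M :=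
    DB.single (CtxStep.base (KSRule.sw (A ⋀ A) (Cn ⋀ Dn) (P2 ⋀ R)))
      (by simp only [Formula.size, hA, size_alphaF, hCn, hDn, hP2, size_apow, hR, hM] <;> omega)
      (by simp only [Formula.size, hA, size_alphaF, hCn, hDn, hP2, size_apow, hR, hM] <;> omega)
  have v4 : DB (((A ⋀ A) ⋀ (Cn ⋀ Dn)) ⋁ (P2 ⋀ R))
      (((A ⋀ Cn) ⋀ (A ⋀ Dn)) ⋁ (P2 ⋀ R)) 1 M :=
    DB.eqv ((FEq.sw4 A A Cn Dn).orCongL (P2 ⋀ R))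
      (by simp only [Formula.size, hA, size_alphaF, hCn, hDn, hP2, size_apow, hR, hM] <;> omega)
      (by simp only [Formula.size, hA, size_alphaF, hCn, hDn, hP2, size_apow, hR, hM] <;> omega)
  have v5 : DB (((A ⋀ Cn) ⋀ (A ⋀ Dn)) ⋁ (P2 ⋀ R))
      (((A ⋀ Cn) ⋀ (A ⋀ Dn)) ⋁ statTail (j + 2) j) (20 * j + 20) M := by
    have hmt := (tailLem (j + 1) j (by omega)).orR ((A ⋀ Cn) ⋀ (A ⋀ Dn))
    exact hmt.mono le_rfl
      (by simp only [Formula.size, hA, size_alphaF, hCn, hDn, hM] <;> omega)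
  have vD := (((((v0.comp v1).comp v2).comp v3).comp v4).comp v5)
  have u3 : DB ((S ⋀ PW) ⋁ NA) ((statTail (j + 2) (j + 1)) ⋁ NA)
      (1 + 1 + 1 + 1 + 1 + 1 + 1 + 1 + 1 + (20 * j + 20) + 1) (M + 2) := by
    rw [hfinD]
    exact (vD.orL NA).mono le_rfl (by simp only [hNA, size_NAF]; omega)
  have u4 : DB ((statTail (j + 2) (j + 1)) ⋁ NA) (statman (j + 2)) 1 (M + 2) := by
    rw [hfin]
    refine DB.eqv (FEq.orComm _ NA) ?_ ?_ <;>
      (simp only [Formula.size, hNA, size_NAF, hM] <;> omega)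
  have htot := ((((((u0.mono le_rfl (by omega)).comp (u1.mono le_rfl (by omega))).comp
      (u2.mono le_rfl (by omega))).comp u3).comp u4))
  rw [hS] at htot
  exact htot.mono (by omega) (by omega)

/-- KS proofs of all Statman tautologies, with quartic total size. -/
lemma proofLem : ∀ n : ℕ, 1 ≤ n →
    DB .top (statman n) (400 * n ^ 2) (30 * n ^ 2 + 200 * n + 300) := by
  intro n hn
  induction n, hn using Nat.le_induction with
  | base =>
      have h : statman 1 = (NAF 1) ⋁ (alphaF 1) := rfl
      rw [h]
      exact (identLemma 1).mono (by norm_num) (by norm_num)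
  | succ n hn ih =>
      obtain ⟨j, rfl⟩ : ∃ j, n = j + 1 := ⟨n - 1, by omega⟩
      have hstep := stepLem j
      have e1 : 30 * (j + 1) ^ 2 + 200 * (j + 1) + 300 ≤
          30 * (j + 1 + 1) ^ 2 + 200 * (j + 1 + 1) + 300 := by nlinarith
      have e2 : 30 * j ^ 2 + 200 * j + 300 ≤
          30 * (j + 1 + 1) ^ 2 + 200 * (j + 1 + 1) + 300 := by nlinarith
      have htot := (ih.mono le_rfl e1).comp (hstep.mono le_rfl e2)
      exact htot.mono (by nlinarith) le_rfl

lemma statman_ks_aux :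
    ∃ C : ℕ, ∀ n : ℕ, 1 ≤ n →
      (∃ l s : ℕ, Deriv KSRule .top (statman n) l s ∧ s ≤ C * n ^ 4) ∧
      (∃ l s : ℕ, Deriv KSRule (statman n) (statman (n + 1)) l s ∧
        l ≤ C * n ∧ s ≤ C * n ^ 3) := by
  refine ⟨1000000, fun n hn => ⟨?_, ?_⟩⟩
  · obtain ⟨l', s', d, hl, hs⟩ := proofLem n hn
    refine ⟨l', s', d, ?_⟩
    have e0 : 1 ≤ n ^ 4 := Nat.one_le_pow _ _ (by omega)
    have e1 : n ≤ n ^ 4 := by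
      calc n = n ^ 1 := (pow_one n).symm
      _ ≤ n ^ 4 := Nat.pow_le_pow_right (by omega) (by omega)
    have e2 : n ^ 2 ≤ n ^ 4 := Nat.pow_le_pow_right (by omega) (by omega)
    have e3 : n ^ 3 ≤ n ^ 4 := Nat.pow_le_pow_right (by omega) (by omega)
    have expand : (400 * n ^ 2 + 1) * (30 * n ^ 2 + 200 * n + 300)
        = 12000 * n ^ 4 + 80000 * n ^ 3 + 120030 * n ^ 2 + 200 * n + 300 := by ring
    omega
  · obtain ⟨j, rfl⟩ : ∃ j, n = j + 1 := ⟨n - 1, by omega⟩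
    obtain ⟨l', s', d, hl, hs⟩ := stepLem j
    refine ⟨l', s', d, by omega, ?_⟩
    have expand : (150 * j + 300 + 1) * (30 * j ^ 2 + 200 * j + 300)
        = 4500 * j ^ 3 + 39030 * j ^ 2 + 105200 * j + 90300 := by ring
    have expand2 : 1000000 * (j + 1) ^ 3
        = 1000000 * j ^ 3 + 3000000 * j ^ 2 + 3000000 * j + 1000000 := by ring
    omega

/-- Theorem ThStat and Lemma LemStat: there are KS proofs of the
Statman tautologies of size `O(n⁴)` (hence quadratic in `|S_n| = 2n²+2`), and a
KS derivation from `S_n` to `S_{n+1}` of length `O(n)` and size `O(n³)`. -/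
theorem statman_ks_proofs :
    ∃ C : ℕ, ∀ n : ℕ, 1 ≤ n →
      (∃ l s : ℕ, Deriv KSRule .top (statman n) l s ∧ s ≤ C * n ^ 4) ∧
      (∃ l s : ℕ, Deriv KSRule (statman n) (statman (n + 1)) l s ∧
        l ≤ C * n ∧ s ≤ C * n ^ 3) := by
  exact statman_ks_aux
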